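/- Let H be the IR-graph of a finite simple graph G, suppose H is a tree with diameter 3, and let X = {x_1,...,x_r} be an IR(G)-set in which exactly the three vertices x_1, x_2, x_3 have positive degree in G[X]. For i = 1,2,3 let x_i' ∈ EPN(x_i, X), let X' be the flip-set of X using {x_1', x_2', x_3'}, and assume that P: (X, X_1, X_2, X') with X_1 = {x_1', x_2, ..., x_r} and X_2 = {x_1', x_2', x_3, ..., x_r} is an X–X' geodesic in H. Then: (i) the induced subgraph G[{x_1, x_2, x_3, x_1', x_2', x_3'}] has edge set exactly {x_1x_2, x_1x_3, x_1x_1', x_2x_2', x_3x_3', x_1'x_3', x_2'x_3'}; in particular X_1 and X_2 are independent; (ii) the set U = {x_1, x_1', x_2, x_4, ..., x_r} is an IR(G)-set with x_3 ∈ EPN(x_1, U), x_3' ∈ EPN(x_1', U) and x_2' ∈ EPN(x_2, U); (iii) writing U' = {x_2', x_3', x_3, x_4, ..., x_r} for the flip-set of U using {x_3, x_3', x_2'}, the subgraph of H induced by {X, X_1, X_2, X', U, U'} is the double star S(2,2), in which X_1 and X_2 are the adjacent central vertices, X and U are leaves adjacent to X_1, and X' and U' are leaves adjacent to X_2. -/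

import Mathlib

open SimpleGraph

section IRDefs

variable {V : Type*}

/-- `w` is a `D`-private neighbour of `v`: `w` is dominated by `v` but by no other
vertex of `D`. -/
def IsPrivateNbr (G : SimpleGraph V) (D : Set V) (v w : V) : Prop :=
  (w = v ∨ G.Adj v w) ∧ ∀ u ∈ D, u ≠ v → ¬(w = u ∨ G.Adj u w)

/-- The set `PN(v, D)` of `D`-private neighbours of `v`. -/
def PN (G : SimpleGraph V) (v : V) (D : Set V) : Set V := {w | IsPrivateNbr G D v w}

/-- The set `EPN(v, D) = PN(v, D) − D` of external `D`-private neighbours of `v`. -/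
def EPN (G : SimpleGraph V) (v : V) (D : Set V) : Set V := PN G v D \ D

/-- A set `D` is irredundant if every vertex of `D` has a `D`-private neighbour. -/
def Irredundant (G : SimpleGraph V) (D : Set V) : Prop := ∀ v ∈ D, (PN G v D).Nonempty

/-- The upper irredundance number `IR(G)`. -/
noncomputable def IRnum (G : SimpleGraph V) : ℕ :=
  sSup {n | ∃ D : Set V, Irredundant G D ∧ D.ncard = n}

/-- An `IR(G)`-set: an irredundant set of maximum cardinality `IR(G)`. -/
def IsIRSet (G : SimpleGraph V) (D : Set V) : Prop :=
  Irredundant G D ∧ D.ncard = IRnum G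

/-- The `IR`-graph of `G`: vertices are the `IR(G)`-sets, and `D` is adjacent to `D'`
iff `D' = (D − {u}) ∪ {v}` for some `u ∈ D` and `v ∈ D' − {u}` with `uv ∈ E(G)`. -/
def IRGraph (G : SimpleGraph V) [Fintype V] :
    SimpleGraph {D : Set V // IsIRSet G D} where
  Adj D D' := ∃ a b, a ∈ D.1 ∧ b ∈ D'.1 ∧ b ≠ a ∧ G.Adj a b ∧ D'.1 = (D.1 \ {a}) ∪ {b}
  symm := by
    constructor
    rintro ⟨D, hD⟩ ⟨D', hD'⟩ ⟨a, b, ha, hb, hba, hadj, heq⟩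
    dsimp only at ha hb heq ⊢
    have hbD : b ∉ D := by
      intro hbD
      have h1 : D' = D \ {a} := by
        rw [heq]
        ext x
        simp only [Set.mem_union, Set.mem_diff, Set.mem_singleton_iff]
        constructor
        · rintro (h | rfl)
          · exact h
          · exact ⟨hbD, hba⟩
        · exact Or.inl
      have h2 : D'.ncard = D.ncard - 1 := by
        rw [h1, Set.ncard_diff_singleton_of_mem ha]
      have h3 : D.ncard = D'.ncard := by rw [hD.2, hD'.2]
      have h4 : 0 < D.ncard := (Set.ncard_pos (Set.toFinite D)).2 ⟨a, ha⟩
      omega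
    refine ⟨b, a, hb, ha, fun h => hba h.symm, hadj.symm, ?_⟩
    rw [heq]
    ext x
    simp only [Set.mem_union, Set.mem_diff, Set.mem_singleton_iff]
    constructor
    · intro hx
      by_cases hxa : x = a
      · exact Or.inr hxa
      · have hxb : x ≠ b := fun h => hbD (h ▸ hx)
        exact Or.inl ⟨Or.inl ⟨hx, hxa⟩, hxb⟩
    · rintro (⟨(⟨hx, _⟩ | rfl), hxb⟩ | rfl)
      · exact hx
      · exact absurd rfl hxb
      · exact ha
  loopless := by
    constructor
    rintro ⟨D, hD⟩ ⟨a, b, ha, hb, hba, hadj, heq⟩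
    dsimp only at ha hb heq
    have h2 : a ∈ (D \ {a}) ∪ {b} := heq ▸ ha
    rcases h2 with h | h
    · exact h.2 rfl
    · exact hba h.symm

end IRDefs

/-- The double star `S(a,b)`: adjacent centres `Sum.inl false` (with `a` leaves) and
`Sum.inl true` (with `b` leaves). -/
def doubleStar (a b : ℕ) : SimpleGraph (Bool ⊕ (Fin a ⊕ Fin b)) :=
  SimpleGraph.fromRel (fun x y =>
    (x = Sum.inl false ∧ y = Sum.inl true) ∨
    (∃ i, x = Sum.inl false ∧ y = Sum.inr (Sum.inl i)) ∨
    (∃ j, x = Sum.inl true ∧ y = Sum.inr (Sum.inr j)))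

/-!
`X – X₁ – X₂ – X'` is a geodesic in a tree of diameter 3, so `X` and `X'` are leaves whose only
neighbours are `X₁` and `X₂`. Write `R` for the isolated vertices of `G[X]`; every set that occurs
is `R` together with three of `x₁, x₂, x₃, x₁', x₂', x₃'`.

The edges `x₁x₂, x₁x₃` (resp. `x₁'x₃', x₂'x₃'`) are forced because otherwise a single swap turns the
leaf `X` (resp. `X'`) into an independent, hence irredundant, set adjacent to it but different from
`X₁` (resp. `X₂`). The non-edges `x₂x₃` and `x₁'x₂'` need only acyclicity: if `G[A]` has a single
edge `c₁c₂`, replacing `c₁`, `c₂`, or both by external private neighbours gives three IR-sets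
forming a 4-cycle with `A`. Once all edges among the six special vertices are known, `U` and `U'`
are irredundant, and the adjacencies among the six IR-sets are read off from the vertices they
contain.
-/

namespace SimpleGraph.IsAcyclic

variable {W : Type*} {H : SimpleGraph W}

theorem dist_eq_length_of_isPath (hH : H.IsAcyclic) {u v : W} {p : H.Walk u v}
    (hp : p.IsPath) : H.dist u v = p.length := by
  obtain ⟨q, hq, hlen⟩ := p.reachable.exists_path_of_dist
  obtain rfl : p = q := congrArg Subtype.val ((hH.subsingleton_path u v).elim ⟨p, hp⟩ ⟨q, hq⟩)
  exact hlen.symm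

theorem eq_of_mem_commonNeighbors (hH : H.IsAcyclic) {a b c d : W} (hac : a ≠ c)
    (hb : b ∈ H.commonNeighbors a c) (hd : d ∈ H.commonNeighbors a c) : b = d := by
  rw [mem_commonNeighbors] at hb hd
  have hpath : ∀ {x}, (hax : H.Adj a x) → (hcx : H.Adj c x) →
      (Walk.cons hax (Walk.cons hcx.symm Walk.nil)).IsPath := fun hax hcx => by
    simp [hax.ne, hcx.ne', hac]
  simpa using congrArg (fun p : H.Path a c => p.1.getVert 1)
    ((hH.subsingleton_path a c).elim ⟨_, hpath hb.1 hb.2⟩ ⟨_, hpath hd.1 hd.2⟩)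

theorem eq_of_adj_of_dist_eq_three (hH : H.IsAcyclic) (hdist : ∀ u v, H.dist u v ≤ 3)
    {a b c d e : W} (hab : H.Adj a b) (hbc : H.Adj b c) (hcd : H.Adj c d)
    (had : H.dist a d = 3) (hea : H.Adj e a) : e = b := by
  let p : H.Walk a d := .cons hab (.cons hbc (.cons hcd .nil))
  have hp : p.IsPath := p.isPath_of_length_eq_dist had.symm
  by_contra heb
  have hec : e ≠ c := by
    rintro rfl
    have := dist_le (Walk.cons hea.symm (Walk.cons hcd Walk.nil))
    simp only [Walk.length_cons, Walk.length_nil] at this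
    omega
  have hed : e ≠ d := by
    rintro rfl
    have := dist_le (Walk.cons hea.symm Walk.nil)
    simp only [Walk.length_cons, Walk.length_nil] at this
    omega
  have hep : (Walk.cons hea p).IsPath := hp.cons (by simp [p, hea.ne, heb, hec, hed])
  have : H.dist e d = 4 := by simpa [p] using hH.dist_eq_length_of_isPath hep
  have := hdist e d
  omega

end SimpleGraph.IsAcyclic

section

variable {V : Type*} {G : SimpleGraph V}

section PrivateNeighbours

variable {R S T : Set V} {u v w : V}

theorem adj_of_mem_EPN (hw : w ∈ EPN G v S) (hv : v ∈ S) : G.Adj v w :=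
  hw.1.1.resolve_left fun h => hw.2 (h ▸ hv)

theorem not_adj_of_mem_EPN (hw : w ∈ EPN G v S) (hu : u ∈ S) (huv : u ≠ v) : ¬G.Adj u w :=
  fun h => hw.1.2 u hu huv (Or.inr h)

theorem mem_EPN_of_adj (hw : w ∈ PN G v S) (hu : u ∈ S) (huv : u ≠ v) (hadj : G.Adj u v) :
    w ∈ EPN G v S := by
  refine ⟨hw, fun hwS => ?_⟩
  by_cases hwv : w = v
  · exact hw.2 u hu huv (Or.inr (hwv ▸ hadj))
  · exact hw.2 w hwS hwv (Or.inl rfl)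

theorem mem_PN_union (hw : w ∈ PN G v T) (hR : ∀ r ∈ R, ¬(w = r ∨ G.Adj r w)) :
    w ∈ PN G v (R ∪ T) :=
  ⟨hw.1, fun u hu huv => hu.elim (hR u) (fun huT => hw.2 u huT huv)⟩

theorem irredundant_union (hR : G.IsIndepSet R) (hRT : ∀ r ∈ R, ∀ t ∈ T, ¬G.Adj t r)
    (hT : ∀ t ∈ T, (PN G t (R ∪ T)).Nonempty) : Irredundant G (R ∪ T) := by
  rintro v (hv | hv)
  · refine ⟨v, Or.inl rfl, fun u hu huv h => h.elim (fun h => huv h.symm) ?_⟩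
    exact hu.elim (fun hu => hR hu hv huv) (fun hu => hRT v hv u hu)
  · exact hT v hv

theorem SimpleGraph.IsIndepSet.irredundant (hS : G.IsIndepSet S) : Irredundant G S :=
  fun v hv => ⟨v, Or.inl rfl, fun _ hu huv h => h.elim (fun h => huv h.symm) (hS hu hv huv)⟩

theorem SimpleGraph.IsIndepSet.sdiff_union_of_mem_PN (hS : G.IsIndepSet (S \ {v}))
    (hw : w ∈ PN G v S) : G.IsIndepSet (S \ {v} ∪ {w}) := by
  refine Set.pairwise_union.2 ⟨hS, Set.pairwise_singleton _ _, ?_⟩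
  rintro u ⟨huS, huv⟩ _ rfl -
  exact ⟨fun h => hw.2 u huS huv (Or.inr h), fun h => hw.2 u huS huv (Or.inr h.symm)⟩

end PrivateNeighbours

section IRGraph

variable {S : Set V} {a b : V}

theorem IsIRSet.swap (hS : IsIRSet G S) (ha : a ∈ S) (hb : b ∉ S)
    (h : Irredundant G (S \ {a} ∪ {b})) : IsIRSet G (S \ {a} ∪ {b}) :=
  ⟨h, by rw [Set.union_singleton, Set.ncard_exchange hb ha, hS.2]⟩

variable [Fintype V]

theorem IRGraph.adj_of_eq {S' : Set V} (hS : IsIRSet G S) (hS' : IsIRSet G S') (ha : a ∈ S)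
    (hab : G.Adj a b) (h : S' = S \ {a} ∪ {b}) : (IRGraph G).Adj ⟨S, hS⟩ ⟨S', hS'⟩ := by
  subst h
  exact ⟨a, b, ha, Or.inr rfl, hab.ne', hab, rfl⟩

theorem IRGraph.not_adj_of_mem_sdiff_of_ne {D D' : {S : Set V // IsIRSet G S}} {q q' : V}
    (hq : q ∈ D'.1 \ D.1) (hq' : q' ∈ D'.1 \ D.1) (hne : q ≠ q') : ¬(IRGraph G).Adj D D' := by
  rintro ⟨a, b, -, -, -, -, he⟩
  rw [he] at hq hq'
  grind

theorem IRGraph.not_adj_of_mem_sdiff_of_not_adj {D D' : {S : Set V // IsIRSet G S}} {p q : V}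
    (hp : p ∈ D.1 \ D'.1) (hq : q ∈ D'.1 \ D.1) (hpq : ¬G.Adj p q) : ¬(IRGraph G).Adj D D' := by
  rintro ⟨a, b, -, -, -, hab, he⟩
  rw [he] at hp hq
  obtain rfl : p = a := by grind
  obtain rfl : q = b := by grind
  exact hpq hab

theorem IRGraph.not_irredundant_swap_of_forall_adj {N : Set V} (hS : IsIRSet G S)
    (hleaf : ∀ D, (IRGraph G).Adj ⟨S, hS⟩ D → D.1 = N) {p : V} (ha : a ∈ S) (hb : b ∉ S)
    (hab : G.Adj a b) (hp : p ∈ S \ {a}) (hpN : p ∉ N) : ¬Irredundant G (S \ {a} ∪ {b}) :=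
  fun h => hpN (hleaf _ (IRGraph.adj_of_eq hS (hS.swap ha hb h) ha hab rfl) ▸ Or.inl hp)

/-- `S`, its swaps `a ↦ b` and `c ↦ w`, and the swap doing both would form a 4-cycle. -/
theorem IRGraph.not_irredundant_swap_square (hH : (IRGraph G).IsAcyclic) (hS : IsIRSet G S)
    {c w : V} (ha : a ∈ S) (hb : b ∉ S) (hab : G.Adj a b) (hc : c ∈ S) (hca : c ≠ a)
    (hw : w ∉ S) (hwb : w ≠ b) (hcw : G.Adj c w) (hB : Irredundant G (S \ {a} ∪ {b}))
    (hA' : Irredundant G (S \ {c} ∪ {w})) :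
    ¬Irredundant G ((S \ {a} ∪ {b}) \ {c} ∪ {w}) := by
  intro hB'
  have hBS : IsIRSet G (S \ {a} ∪ {b}) := hS.swap ha hb hB
  have hA'S : IsIRSet G (S \ {c} ∪ {w}) := hS.swap hc hw hA'
  have hB'S : IsIRSet G ((S \ {a} ∪ {b}) \ {c} ∪ {w}) :=
    hBS.swap (Or.inl ⟨hc, hca⟩) (by grind) hB'
  have hcomm : (S \ {a} ∪ {b}) \ {c} ∪ {w} = (S \ {c} ∪ {w}) \ {a} ∪ {b} := by
    ext u; simp only [Set.mem_union, Set.mem_sdiff, Set.mem_singleton_iff]; grind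
  have hSB' : (⟨S, hS⟩ : {D : Set V // IsIRSet G D}) ≠ ⟨_, hB'S⟩ := fun e =>
    (by grind : c ∉ (S \ {a} ∪ {b}) \ {c} ∪ {w}) (Subtype.mk.inj e ▸ hc)
  have hBA' := hH.eq_of_mem_commonNeighbors hSB'
    ⟨IRGraph.adj_of_eq hS hBS ha hab rfl,
      (IRGraph.adj_of_eq hBS hB'S (Or.inl ⟨hc, hca⟩) hcw rfl).symm⟩
    ⟨IRGraph.adj_of_eq hS hA'S hc hcw rfl,
      (IRGraph.adj_of_eq hA'S hB'S (Or.inl ⟨ha, hca.symm⟩) hab hcomm).symm⟩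
  exact (by grind : b ∉ S \ {c} ∪ {w}) (Subtype.mk.inj hBA' ▸ Or.inr rfl)

theorem IRGraph.not_adj_of_isAcyclic (hH : (IRGraph G).IsAcyclic) {A : Set V}
    (hA : IsIRSet G A) {c₁ c₂ : V} (hc₁ : c₁ ∈ A) (hc₂ : c₂ ∈ A)
    (hiso : ∀ v ∈ A, v ≠ c₁ → v ≠ c₂ → ∀ u ∈ A, ¬G.Adj u v) : ¬G.Adj c₁ c₂ := by
  intro h₁₂
  obtain ⟨w₁, hw₁⟩ := hA.1 c₁ hc₁
  obtain ⟨w₂, hw₂⟩ := hA.1 c₂ hc₂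
  replace hw₁ : w₁ ∈ EPN G c₁ A := mem_EPN_of_adj hw₁ hc₂ h₁₂.ne' h₁₂.symm
  replace hw₂ : w₂ ∈ EPN G c₂ A := mem_EPN_of_adj hw₂ hc₁ h₁₂.ne h₁₂
  have hindep : ∀ c, (c = c₁ ∨ c = c₂) → G.IsIndepSet (A \ {c}) := by
    rintro c hc u ⟨hu, huc⟩ v ⟨hv, hvc⟩ huv hadj
    by_cases hv' : v = c₁ ∨ v = c₂
    · exact hiso u hu (by grind) (by grind) v hv hadj.symm
    · exact hiso v hv (by grind) (by grind) u hu hadj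
  have hne : c₁ ≠ c₂ := h₁₂.ne
  have hw₁A : w₁ ∉ A := hw₁.2
  have hw₂A : w₂ ∉ A := hw₂.2
  have adj₁ := adj_of_mem_EPN hw₁ hc₁
  have adj₂ := adj_of_mem_EPN hw₂ hc₂
  have nadj₁ : ∀ u ∈ A, u ≠ c₁ → ¬G.Adj u w₁ := fun u hu => not_adj_of_mem_EPN hw₁ hu
  have nadj₂ : ∀ u ∈ A, u ≠ c₂ → ¬G.Adj u w₂ := fun u hu => not_adj_of_mem_EPN hw₂ hu
  refine IRGraph.not_irredundant_swap_square hH hA hc₁ hw₁A adj₁ hc₂ hne.symm hw₂A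
    (fun h => nadj₂ c₁ hc₁ hne (h ▸ adj₁)) adj₂
    ((hindep c₁ (Or.inl rfl)).sdiff_union_of_mem_PN hw₁.1).irredundant
    ((hindep c₂ (Or.inr rfl)).sdiff_union_of_mem_PN hw₂.1).irredundant ?_
  intro v hv
  simp only [Set.mem_union, Set.mem_sdiff, Set.mem_singleton_iff] at hv
  rcases hv with ⟨⟨hvA, hv₁⟩ | rfl, hv₂⟩ | rfl
  · refine ⟨v, Or.inl rfl, ?_⟩
    simp only [Set.mem_union, Set.mem_sdiff, Set.mem_singleton_iff]
    grind [SimpleGraph.Adj.symm]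
  · refine ⟨c₁, Or.inr adj₁.symm, ?_⟩
    simp only [Set.mem_union, Set.mem_sdiff, Set.mem_singleton_iff]
    grind [SimpleGraph.Adj.symm]
  · refine ⟨c₂, Or.inr adj₂.symm, ?_⟩
    simp only [Set.mem_union, Set.mem_sdiff, Set.mem_singleton_iff]
    grind [SimpleGraph.Adj.symm]

theorem IRGraph.isIndepSet_of_isAcyclic (hH : (IRGraph G).IsAcyclic) {A : Set V}
    (hA : IsIRSet G A) {c₁ c₂ : V} (hiso : ∀ v ∈ A, v ≠ c₁ → v ≠ c₂ → ∀ u ∈ A, ¬G.Adj u v) :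
    G.IsIndepSet A := by
  intro u hu v hv huv hadj
  have hu' : u = c₁ ∨ u = c₂ := by
    by_contra! h
    exact hiso u hu h.1 h.2 v hv hadj.symm
  have hv' : v = c₁ ∨ v = c₂ := by
    by_contra! h
    exact hiso v hv h.1 h.2 u hu hadj
  exact IRGraph.not_adj_of_isAcyclic hH hA hu hv
    (fun x hx hxu hxv => hiso x hx (by grind) (by grind)) hadj

end IRGraph

/-- The situation of the theorem with `X = R ∪ {x₁, x₂, x₃}`, where `R` consists of the isolated
vertices of `G[X]`. -/
structure FlipGeodesic (G : SimpleGraph V) [Fintype V] (R : Set V) (x₁ x₂ x₃ x₁' x₂' x₃' : V) :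
    Prop where
  isolated : ∀ r ∈ R, ∀ v ∈ R ∪ {x₁, x₂, x₃}, ¬G.Adj v r
  x_notMem : x₁ ∉ R ∧ x₂ ∉ R ∧ x₃ ∉ R
  x_ne : x₁ ≠ x₂ ∧ x₁ ≠ x₃ ∧ x₂ ≠ x₃
  epn₁ : x₁' ∈ EPN G x₁ (R ∪ {x₁, x₂, x₃})
  epn₂ : x₂' ∈ EPN G x₂ (R ∪ {x₁, x₂, x₃})
  epn₃ : x₃' ∈ EPN G x₃ (R ∪ {x₁, x₂, x₃})
  isIRSet_X : IsIRSet G (R ∪ {x₁, x₂, x₃})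
  isIRSet_X₁ : IsIRSet G (R ∪ {x₁', x₂, x₃})
  isIRSet_X₂ : IsIRSet G (R ∪ {x₁', x₂', x₃})
  isIRSet_X' : IsIRSet G (R ∪ {x₁', x₂', x₃'})
  isAcyclic : (IRGraph G).IsAcyclic
  leaf_X : ∀ D, (IRGraph G).Adj ⟨_, isIRSet_X⟩ D → D.1 = R ∪ {x₁', x₂, x₃}
  leaf_X' : ∀ D, (IRGraph G).Adj ⟨_, isIRSet_X'⟩ D → D.1 = R ∪ {x₁', x₂', x₃}

namespace FlipGeodesic

variable [Fintype V] {R : Set V} {x₁ x₂ x₃ x₁' x₂' x₃' : V}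

theorem adj (h : FlipGeodesic G R x₁ x₂ x₃ x₁' x₂' x₃') :
    G.Adj x₁ x₁' ∧ G.Adj x₂ x₂' ∧ G.Adj x₃ x₃' :=
  ⟨adj_of_mem_EPN h.epn₁ (by simp), adj_of_mem_EPN h.epn₂ (by simp),
    adj_of_mem_EPN h.epn₃ (by simp)⟩

theorem not_adj (h : FlipGeodesic G R x₁ x₂ x₃ x₁' x₂' x₃') :
    ¬G.Adj x₂ x₁' ∧ ¬G.Adj x₃ x₁' ∧ ¬G.Adj x₁ x₂' ∧ ¬G.Adj x₃ x₂' ∧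
      ¬G.Adj x₁ x₃' ∧ ¬G.Adj x₂ x₃' := by
  obtain ⟨h₁₂, h₁₃, h₂₃⟩ := h.x_ne
  exact ⟨not_adj_of_mem_EPN h.epn₁ (by simp) h₁₂.symm,
    not_adj_of_mem_EPN h.epn₁ (by simp) h₁₃.symm, not_adj_of_mem_EPN h.epn₂ (by simp) h₁₂,
    not_adj_of_mem_EPN h.epn₂ (by simp) h₂₃.symm, not_adj_of_mem_EPN h.epn₃ (by simp) h₁₃,
    not_adj_of_mem_EPN h.epn₃ (by simp) h₂₃⟩

theorem notMem (h : FlipGeodesic G R x₁ x₂ x₃ x₁' x₂' x₃') :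
    x₁ ∉ R ∧ x₂ ∉ R ∧ x₃ ∉ R ∧ x₁' ∉ R ∧ x₂' ∉ R ∧ x₃' ∉ R := by
  grind [h.x_notMem, h.epn₁.2, h.epn₂.2, h.epn₃.2]

theorem ne (h : FlipGeodesic G R x₁ x₂ x₃ x₁' x₂' x₃') :
    x₁ ≠ x₂ ∧ x₁ ≠ x₃ ∧ x₂ ≠ x₃ ∧ x₁' ≠ x₂' ∧ x₁' ≠ x₃' ∧ x₂' ≠ x₃' ∧
      x₁' ≠ x₁ ∧ x₁' ≠ x₂ ∧ x₁' ≠ x₃ ∧ x₂' ≠ x₁ ∧ x₂' ≠ x₂ ∧ x₂' ≠ x₃ ∧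
      x₃' ≠ x₁ ∧ x₃' ≠ x₂ ∧ x₃' ≠ x₃ := by
  grind [h.x_ne, h.adj, h.not_adj, h.epn₁.2, h.epn₂.2, h.epn₃.2]

theorem notDominated (h : FlipGeodesic G R x₁ x₂ x₃ x₁' x₂' x₃') {v : V}
    (hv : v ∈ ({x₁, x₂, x₃, x₁', x₂', x₃'} : Set V)) : ∀ r ∈ R, ¬(v = r ∨ G.Adj r v) := by
  intro r hr
  obtain ⟨h₁, h₂, h₃, -⟩ := h.notMem
  have hr' : ∀ x ∉ R, r ≠ x := fun x hx e => hx (e ▸ hr)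
  have hx : ∀ x ∈ ({x₁, x₂, x₃} : Set V), x ∉ R → ¬(x = r ∨ G.Adj r x) := fun x hx hxR =>
    not_or.2 ⟨(hr' x hxR).symm, fun hadj => h.isolated r hr x (Or.inr hx) hadj.symm⟩
  simp only [Set.mem_insert_iff, Set.mem_singleton_iff] at hv
  rcases hv with rfl | rfl | rfl | rfl | rfl | rfl
  · exact hx _ (by simp) h₁
  · exact hx _ (by simp) h₂
  · exact hx _ (by simp) h₃
  · exact h.epn₁.1.2 r (Or.inl hr) (hr' _ h₁)
  · exact h.epn₂.1.2 r (Or.inl hr) (hr' _ h₂)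
  · exact h.epn₃.1.2 r (Or.inl hr) (hr' _ h₃)

theorem isolated' (h : FlipGeodesic G R x₁ x₂ x₃ x₁' x₂' x₃') :
    ∀ r ∈ R, ∀ v ∈ R ∪ {x₁, x₂, x₃, x₁', x₂', x₃'}, ¬G.Adj v r := by
  rintro r hr v (hv | hv) hadj
  · exact h.isolated r hr v (Or.inl hv) hadj
  · exact h.notDominated hv r hr (Or.inr hadj.symm)

theorem isIndepSet (h : FlipGeodesic G R x₁ x₂ x₃ x₁' x₂' x₃') : G.IsIndepSet R :=
  fun r hr s hs _ => h.isolated s hs r (Or.inl hr)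

theorem irredundant_of_subset (h : FlipGeodesic G R x₁ x₂ x₃ x₁' x₂' x₃') {S T : Set V}
    (hT : T ⊆ {x₁, x₂, x₃, x₁', x₂', x₃'}) (hTi : G.IsIndepSet T) (hS : S ⊆ R ∪ T) :
    Irredundant G S := by
  refine IsIndepSet.irredundant (Set.Pairwise.mono hS (Set.pairwise_union.2
    ⟨h.isIndepSet, hTi, fun r hr _ ht _ => ⟨fun hadj => ?_, fun hadj => ?_⟩⟩))
  exacts [h.notDominated (hT ht) r hr (Or.inr hadj),
    h.notDominated (hT ht) r hr (Or.inr hadj.symm)]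

theorem mem_PN_union (h : FlipGeodesic G R x₁ x₂ x₃ x₁' x₂' x₃') {T : Set V} {v w : V}
    (hw : w ∈ ({x₁, x₂, x₃, x₁', x₂', x₃'} : Set V)) (hwT : w ∈ PN G v T) :
    w ∈ PN G v (R ∪ T) :=
  _root_.mem_PN_union hwT (h.notDominated hw)

theorem ncard_union_eq (h : FlipGeodesic G R x₁ x₂ x₃ x₁' x₂' x₃') {a b c : V}
    (hT : ({a, b, c} : Set V) ⊆ {x₁, x₂, x₃, x₁', x₂', x₃'}) (hab : a ≠ b) (hac : a ≠ c)
    (hbc : b ≠ c) : (R ∪ {a, b, c}).ncard = IRnum G := by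
  have hdisj : ∀ {a b c : V}, ({a, b, c} : Set V) ⊆ {x₁, x₂, x₃, x₁', x₂', x₃'} →
      Disjoint R {a, b, c} := fun hT => Set.disjoint_right.2 fun v hv hvR =>
    h.notDominated (hT hv) v hvR (Or.inl rfl)
  rw [← h.isIRSet_X.2, Set.ncard_union_eq (hdisj hT),
    Set.ncard_union_eq (hdisj (by simp [Set.insert_subset_iff])),
    Set.ncard_eq_three.2 ⟨a, b, c, hab, hac, hbc, rfl⟩,
    Set.ncard_eq_three.2 ⟨x₁, x₂, x₃, h.x_ne.1, h.x_ne.2.1, h.x_ne.2.2, rfl⟩]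

theorem isIndepSet_X₁ (h : FlipGeodesic G R x₁ x₂ x₃ x₁' x₂' x₃') :
    G.IsIndepSet (R ∪ {x₁', x₂, x₃}) :=
  IRGraph.isIndepSet_of_isAcyclic h.isAcyclic h.isIRSet_X₁ (c₁ := x₂) (c₂ := x₃) <| by
    grind [h.isolated', h.not_adj, SimpleGraph.Adj.symm, G.loopless.irrefl]

theorem isIndepSet_X₂ (h : FlipGeodesic G R x₁ x₂ x₃ x₁' x₂' x₃') :
    G.IsIndepSet (R ∪ {x₁', x₂', x₃}) :=
  IRGraph.isIndepSet_of_isAcyclic h.isAcyclic h.isIRSet_X₂ (c₁ := x₁') (c₂ := x₂') <| by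
    grind [h.isolated', h.not_adj, SimpleGraph.Adj.symm, G.loopless.irrefl]

theorem not_adj_x₂_x₃ (h : FlipGeodesic G R x₁ x₂ x₃ x₁' x₂' x₃') : ¬G.Adj x₂ x₃ :=
  h.isIndepSet_X₁ (by simp) (by simp) h.x_ne.2.2

theorem not_adj_x₁'_x₂' (h : FlipGeodesic G R x₁ x₂ x₃ x₁' x₂' x₃') : ¬G.Adj x₁' x₂' :=
  h.isIndepSet_X₂ (by simp) (by simp) (by grind [h.ne])

theorem adj_x₁_x₂ (h : FlipGeodesic G R x₁ x₂ x₃ x₁' x₂' x₃') : G.Adj x₁ x₂ := by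
  by_contra h₁₂
  refine IRGraph.not_irredundant_swap_of_forall_adj h.isIRSet_X h.leaf_X (a := x₃) (b := x₃')
    (p := x₁) (by simp) h.epn₃.2 h.adj.2.2 (by grind [h.ne]) (by grind [h.notMem, h.ne])
    (h.irredundant_of_subset (T := {x₁, x₂, x₃'}) (by simp [Set.insert_subset_iff]) ?_
      (by intro u; simp; tauto))
  simp only [IsIndepSet, Set.pairwise_insert, Set.pairwise_singleton]
  grind [h.not_adj, SimpleGraph.Adj.symm]

theorem adj_x₁_x₃ (h : FlipGeodesic G R x₁ x₂ x₃ x₁' x₂' x₃') : G.Adj x₁ x₃ := by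
  by_contra h₁₃
  refine IRGraph.not_irredundant_swap_of_forall_adj h.isIRSet_X h.leaf_X (a := x₂) (b := x₂')
    (p := x₁) (by simp) h.epn₂.2 h.adj.2.1 (by grind [h.ne]) (by grind [h.notMem, h.ne])
    (h.irredundant_of_subset (T := {x₁, x₃, x₂'}) (by simp [Set.insert_subset_iff]) ?_
      (by intro u; simp; tauto))
  simp only [IsIndepSet, Set.pairwise_insert, Set.pairwise_singleton]
  grind [h.not_adj, SimpleGraph.Adj.symm]

theorem adj_x₂'_x₃' (h : FlipGeodesic G R x₁ x₂ x₃ x₁' x₂' x₃') : G.Adj x₂' x₃' := by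
  by_contra h₂₃
  refine IRGraph.not_irredundant_swap_of_forall_adj h.isIRSet_X' h.leaf_X' (a := x₁') (b := x₁)
    (p := x₃') (by simp) (by grind [h.notMem, h.ne]) h.adj.1.symm (by grind [h.ne])
    (by grind [h.notMem, h.ne])
    (h.irredundant_of_subset (T := {x₁, x₂', x₃'}) (by simp [Set.insert_subset_iff]) ?_
      (by intro u; simp; tauto))
  simp only [IsIndepSet, Set.pairwise_insert, Set.pairwise_singleton]
  grind [h.not_adj, SimpleGraph.Adj.symm]

theorem adj_x₁'_x₃' (h : FlipGeodesic G R x₁ x₂ x₃ x₁' x₂' x₃') : G.Adj x₁' x₃' := by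
  by_contra h₁₃
  refine IRGraph.not_irredundant_swap_of_forall_adj h.isIRSet_X' h.leaf_X' (a := x₂') (b := x₂)
    (p := x₃') (by simp) (by grind [h.notMem, h.ne]) h.adj.2.1.symm (by grind [h.ne])
    (by grind [h.notMem, h.ne])
    (h.irredundant_of_subset (T := {x₂, x₁', x₃'}) (by simp [Set.insert_subset_iff]) ?_
      (by intro u; simp; tauto))
  simp only [IsIndepSet, Set.pairwise_insert, Set.pairwise_singleton]
  grind [h.not_adj, SimpleGraph.Adj.symm]

theorem adj_iff (h : FlipGeodesic G R x₁ x₂ x₃ x₁' x₂' x₃') {p q : V}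
    (hp : p ∈ ({x₁, x₂, x₃, x₁', x₂', x₃'} : Set V))
    (hq : q ∈ ({x₁, x₂, x₃, x₁', x₂', x₃'} : Set V)) :
    G.Adj p q ↔
      ((p = x₁ ∧ q = x₂) ∨ (p = x₂ ∧ q = x₁) ∨
       (p = x₁ ∧ q = x₃) ∨ (p = x₃ ∧ q = x₁) ∨
       (p = x₁ ∧ q = x₁') ∨ (p = x₁' ∧ q = x₁) ∨
       (p = x₂ ∧ q = x₂') ∨ (p = x₂' ∧ q = x₂) ∨
       (p = x₃ ∧ q = x₃') ∨ (p = x₃' ∧ q = x₃) ∨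
       (p = x₁' ∧ q = x₃') ∨ (p = x₃' ∧ q = x₁') ∨
       (p = x₂' ∧ q = x₃') ∨ (p = x₃' ∧ q = x₂')) := by
  simp only [Set.mem_insert_iff, Set.mem_singleton_iff] at hp hq
  rcases hp with rfl | rfl | rfl | rfl | rfl | rfl <;>
    rcases hq with rfl | rfl | rfl | rfl | rfl | rfl <;>
    grind [h.ne, h.adj, h.not_adj, h.adj_x₁_x₂, h.adj_x₁_x₃, h.adj_x₁'_x₃', h.adj_x₂'_x₃',
      h.not_adj_x₂_x₃, h.not_adj_x₁'_x₂', SimpleGraph.Adj.symm, G.loopless.irrefl]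

theorem mem_EPN_U (h : FlipGeodesic G R x₁ x₂ x₃ x₁' x₂' x₃') :
    x₃ ∈ EPN G x₁ (R ∪ {x₁, x₂, x₁'}) ∧ x₃' ∈ EPN G x₁' (R ∪ {x₁, x₂, x₁'}) ∧
      x₂' ∈ EPN G x₂ (R ∪ {x₁, x₂, x₁'}) := by
  refine ⟨⟨h.mem_PN_union (by simp) ?_, ?_⟩, ⟨h.mem_PN_union (by simp) ?_, ?_⟩,
    ⟨h.mem_PN_union (by simp) ?_, ?_⟩⟩ <;>
    simp only [PN, IsPrivateNbr, Set.mem_ofPred_eq, Set.mem_union] <;>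
    grind [h.notMem, h.ne, h.adj, h.not_adj, h.adj_x₁_x₃, h.adj_x₁'_x₃', h.not_adj_x₂_x₃,
      h.not_adj_x₁'_x₂', SimpleGraph.Adj.symm]

theorem mem_PN_U' (h : FlipGeodesic G R x₁ x₂ x₃ x₁' x₂' x₃') :
    x₁ ∈ PN G x₃ (R ∪ {x₃, x₂', x₃'}) ∧ x₂ ∈ PN G x₂' (R ∪ {x₃, x₂', x₃'}) ∧
      x₁' ∈ PN G x₃' (R ∪ {x₃, x₂', x₃'}) := by
  refine ⟨h.mem_PN_union (by simp) ?_, h.mem_PN_union (by simp) ?_,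
    h.mem_PN_union (by simp) ?_⟩ <;>
    simp only [PN, IsPrivateNbr, Set.mem_ofPred_eq] <;>
    grind [h.ne, h.adj, h.not_adj, h.adj_x₁_x₃, h.adj_x₁'_x₃', h.not_adj_x₂_x₃,
      h.not_adj_x₁'_x₂', SimpleGraph.Adj.symm]

theorem isIRSet_U (h : FlipGeodesic G R x₁ x₂ x₃ x₁' x₂' x₃') :
    IsIRSet G (R ∪ {x₁, x₂, x₁'}) := by
  refine ⟨irredundant_union h.isIndepSet (fun r hr t ht => h.isolated' r hr t (by grind)) ?_,
    h.ncard_union_eq (by simp [Set.insert_subset_iff]) (by grind [h.ne]) (by grind [h.ne])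
      (by grind [h.ne])⟩
  obtain ⟨h₁, h₁', h₂⟩ := h.mem_EPN_U
  simp only [Set.mem_insert_iff, Set.mem_singleton_iff]
  rintro t (rfl | rfl | rfl)
  exacts [⟨_, h₁.1⟩, ⟨_, h₂.1⟩, ⟨_, h₁'.1⟩]

theorem isIRSet_U' (h : FlipGeodesic G R x₁ x₂ x₃ x₁' x₂' x₃') :
    IsIRSet G (R ∪ {x₃, x₂', x₃'}) := by
  refine ⟨irredundant_union h.isIndepSet (fun r hr t ht => h.isolated' r hr t (by grind)) ?_,
    h.ncard_union_eq (by simp [Set.insert_subset_iff]) (by grind [h.ne]) (by grind [h.ne])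
      (by grind [h.ne])⟩
  obtain ⟨h₃, h₂', h₃'⟩ := h.mem_PN_U'
  simp only [Set.mem_insert_iff, Set.mem_singleton_iff]
  rintro t (rfl | rfl | rfl)
  exacts [⟨_, h₃⟩, ⟨_, h₂'⟩, ⟨_, h₃'⟩]

theorem adj_U_X₁ (h : FlipGeodesic G R x₁ x₂ x₃ x₁' x₂' x₃') :
    (IRGraph G).Adj ⟨_, h.isIRSet_U⟩ ⟨_, h.isIRSet_X₁⟩ :=
  IRGraph.adj_of_eq _ _ (a := x₁) (b := x₃) (by simp) h.adj_x₁_x₃ <| by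
    ext u; simp; grind [h.notMem, h.ne]

theorem adj_U'_X₂ (h : FlipGeodesic G R x₁ x₂ x₃ x₁' x₂' x₃') :
    (IRGraph G).Adj ⟨_, h.isIRSet_U'⟩ ⟨_, h.isIRSet_X₂⟩ :=
  IRGraph.adj_of_eq _ _ (a := x₃') (b := x₁') (by simp) h.adj_x₁'_x₃'.symm <| by
    ext u; simp; grind [h.notMem, h.ne]

theorem not_adj_X_U (h : FlipGeodesic G R x₁ x₂ x₃ x₁' x₂' x₃') :
    ¬(IRGraph G).Adj ⟨_, h.isIRSet_X⟩ ⟨_, h.isIRSet_U⟩ :=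
  IRGraph.not_adj_of_mem_sdiff_of_not_adj (p := x₃) (q := x₁') (by grind [h.notMem, h.ne])
    (by grind [h.notMem, h.ne]) h.not_adj.2.1

theorem not_adj_X'_U' (h : FlipGeodesic G R x₁ x₂ x₃ x₁' x₂' x₃') :
    ¬(IRGraph G).Adj ⟨_, h.isIRSet_X'⟩ ⟨_, h.isIRSet_U'⟩ :=
  IRGraph.not_adj_of_mem_sdiff_of_not_adj (p := x₁') (q := x₃) (by grind [h.notMem, h.ne])
    (by grind [h.notMem, h.ne]) fun e => h.not_adj.2.1 e.symm

theorem not_adj_X_X₂ (h : FlipGeodesic G R x₁ x₂ x₃ x₁' x₂' x₃') :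
    ¬(IRGraph G).Adj ⟨_, h.isIRSet_X⟩ ⟨_, h.isIRSet_X₂⟩ :=
  IRGraph.not_adj_of_mem_sdiff_of_ne (q := x₁') (q' := x₂') (by grind [h.notMem, h.ne])
    (by grind [h.notMem, h.ne]) (by grind [h.ne])

theorem not_adj_X_X' (h : FlipGeodesic G R x₁ x₂ x₃ x₁' x₂' x₃') :
    ¬(IRGraph G).Adj ⟨_, h.isIRSet_X⟩ ⟨_, h.isIRSet_X'⟩ :=
  IRGraph.not_adj_of_mem_sdiff_of_ne (q := x₁') (q' := x₂') (by grind [h.notMem, h.ne])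
    (by grind [h.notMem, h.ne]) (by grind [h.ne])

theorem not_adj_X_U' (h : FlipGeodesic G R x₁ x₂ x₃ x₁' x₂' x₃') :
    ¬(IRGraph G).Adj ⟨_, h.isIRSet_X⟩ ⟨_, h.isIRSet_U'⟩ :=
  IRGraph.not_adj_of_mem_sdiff_of_ne (q := x₂') (q' := x₃') (by grind [h.notMem, h.ne])
    (by grind [h.notMem, h.ne]) (by grind [h.ne])

theorem not_adj_U_X₂ (h : FlipGeodesic G R x₁ x₂ x₃ x₁' x₂' x₃') :
    ¬(IRGraph G).Adj ⟨_, h.isIRSet_U⟩ ⟨_, h.isIRSet_X₂⟩ :=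
  IRGraph.not_adj_of_mem_sdiff_of_ne (q := x₃) (q' := x₂') (by grind [h.notMem, h.ne])
    (by grind [h.notMem, h.ne]) (by grind [h.ne])

theorem not_adj_U_X' (h : FlipGeodesic G R x₁ x₂ x₃ x₁' x₂' x₃') :
    ¬(IRGraph G).Adj ⟨_, h.isIRSet_U⟩ ⟨_, h.isIRSet_X'⟩ :=
  IRGraph.not_adj_of_mem_sdiff_of_ne (q := x₂') (q' := x₃') (by grind [h.notMem, h.ne])
    (by grind [h.notMem, h.ne]) (by grind [h.ne])

theorem not_adj_U_U' (h : FlipGeodesic G R x₁ x₂ x₃ x₁' x₂' x₃') :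
    ¬(IRGraph G).Adj ⟨_, h.isIRSet_U⟩ ⟨_, h.isIRSet_U'⟩ :=
  IRGraph.not_adj_of_mem_sdiff_of_ne (q := x₃) (q' := x₂') (by grind [h.notMem, h.ne])
    (by grind [h.notMem, h.ne]) (by grind [h.ne])

theorem not_adj_X₁_X' (h : FlipGeodesic G R x₁ x₂ x₃ x₁' x₂' x₃') :
    ¬(IRGraph G).Adj ⟨_, h.isIRSet_X₁⟩ ⟨_, h.isIRSet_X'⟩ :=
  IRGraph.not_adj_of_mem_sdiff_of_ne (q := x₂') (q' := x₃') (by grind [h.notMem, h.ne])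
    (by grind [h.notMem, h.ne]) (by grind [h.ne])

theorem not_adj_X₁_U' (h : FlipGeodesic G R x₁ x₂ x₃ x₁' x₂' x₃') :
    ¬(IRGraph G).Adj ⟨_, h.isIRSet_X₁⟩ ⟨_, h.isIRSet_U'⟩ :=
  IRGraph.not_adj_of_mem_sdiff_of_ne (q := x₂') (q' := x₃') (by grind [h.notMem, h.ne])
    (by grind [h.notMem, h.ne]) (by grind [h.ne])

theorem ncard_eq_six (h : FlipGeodesic G R x₁ x₂ x₃ x₁' x₂' x₃') :
    ({R ∪ {x₁, x₂, x₃}, R ∪ {x₁', x₂, x₃}, R ∪ {x₁', x₂', x₃}, R ∪ {x₁', x₂', x₃'},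
      R ∪ {x₁, x₂, x₁'}, R ∪ {x₃, x₂', x₃'}} : Set (Set V)).ncard = 6 := by
  rw [Set.ncard_insert_of_notMem, Set.ncard_insert_of_notMem, Set.ncard_insert_of_notMem,
    Set.ncard_insert_of_notMem, Set.ncard_pair]
  · exact ne_of_mem_of_not_mem' (a := x₁) (by simp) (by grind [h.notMem, h.ne])
  all_goals simp only [Set.mem_insert_iff, Set.mem_singleton_iff, not_or]
  · exact ⟨ne_of_mem_of_not_mem' (a := x₂') (by simp) (by grind [h.notMem, h.ne]),
      ne_of_mem_of_not_mem' (a := x₁') (by simp) (by grind [h.notMem, h.ne])⟩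
  · exact ⟨ne_of_mem_of_not_mem' (a := x₃) (by simp) (by grind [h.notMem, h.ne]),
      ne_of_mem_of_not_mem' (a := x₂') (by simp) (by grind [h.notMem, h.ne]),
      ne_of_mem_of_not_mem' (a := x₁') (by simp) (by grind [h.notMem, h.ne])⟩
  · exact ⟨ne_of_mem_of_not_mem' (a := x₂) (by simp) (by grind [h.notMem, h.ne]),
      ne_of_mem_of_not_mem' (a := x₂) (by simp) (by grind [h.notMem, h.ne]),
      ne_of_mem_of_not_mem' (a := x₃) (by simp) (by grind [h.notMem, h.ne]),
      ne_of_mem_of_not_mem' (a := x₁') (by simp) (by grind [h.notMem, h.ne])⟩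
  · exact ⟨ne_of_mem_of_not_mem' (a := x₁) (by simp) (by grind [h.notMem, h.ne]),
      ne_of_mem_of_not_mem' (a := x₁) (by simp) (by grind [h.notMem, h.ne]),
      ne_of_mem_of_not_mem' (a := x₁) (by simp) (by grind [h.notMem, h.ne]),
      ne_of_mem_of_not_mem' (a := x₃) (by simp) (by grind [h.notMem, h.ne]),
      ne_of_mem_of_not_mem' (a := x₁) (by simp) (by grind [h.notMem, h.ne])⟩

end FlipGeodesic

end

/-- Lemma 5.1 (adapted): structure of the six `IR(G)`-sets forming `S(2,2)`. -/
theorem statement12 {V : Type*} [Fintype V] (G : SimpleGraph V)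
    (htree : (IRGraph G).IsTree) (hdiam : (IRGraph G).diam = 3)
    (X : Set V) (hX : IsIRSet G X)
    (x1 x2 x3 x1' x2' x3' : V)
    (hx1 : x1 ∈ X) (hx2 : x2 ∈ X) (hx3 : x3 ∈ X)
    (h12 : x1 ≠ x2) (h13 : x1 ≠ x3) (h23 : x2 ≠ x3)
    (hdeg : ∀ y ∈ X, (∃ z ∈ X, G.Adj y z) ↔ (y = x1 ∨ y = x2 ∨ y = x3))
    (hepn1 : x1' ∈ EPN G x1 X) (hepn2 : x2' ∈ EPN G x2 X) (hepn3 : x3' ∈ EPN G x3 X)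
    (X1 X2 X' : Set V)
    (hX1def : X1 = (X \ {x1}) ∪ {x1'})
    (hX2def : X2 = (X \ {x1, x2}) ∪ {x1', x2'})
    (hX'def : X' = (X \ {x1, x2, x3}) ∪ {x1', x2', x3'})
    (hX1 : IsIRSet G X1) (hX2 : IsIRSet G X2) (hX' : IsIRSet G X')
    (hadj1 : (IRGraph G).Adj ⟨X, hX⟩ ⟨X1, hX1⟩)
    (hadj2 : (IRGraph G).Adj ⟨X1, hX1⟩ ⟨X2, hX2⟩)
    (hadj3 : (IRGraph G).Adj ⟨X2, hX2⟩ ⟨X', hX'⟩)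
    (hgeo : (IRGraph G).dist ⟨X, hX⟩ ⟨X', hX'⟩ = 3) :
    ((∀ p ∈ ({x1, x2, x3, x1', x2', x3'} : Set V),
        ∀ q ∈ ({x1, x2, x3, x1', x2', x3'} : Set V),
        (G.Adj p q ↔
          ((p = x1 ∧ q = x2) ∨ (p = x2 ∧ q = x1) ∨
           (p = x1 ∧ q = x3) ∨ (p = x3 ∧ q = x1) ∨
           (p = x1 ∧ q = x1') ∨ (p = x1' ∧ q = x1) ∨
           (p = x2 ∧ q = x2') ∨ (p = x2' ∧ q = x2) ∨
           (p = x3 ∧ q = x3') ∨ (p = x3' ∧ q = x3) ∨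
           (p = x1' ∧ q = x3') ∨ (p = x3' ∧ q = x1') ∨
           (p = x2' ∧ q = x3') ∨ (p = x3' ∧ q = x2')))) ∧
      (∀ p ∈ X1, ∀ q ∈ X1, ¬ G.Adj p q) ∧ (∀ p ∈ X2, ∀ q ∈ X2, ¬ G.Adj p q)) ∧
    ∃ (hU : IsIRSet G ((X \ {x3}) ∪ {x1'}))
      (hU' : IsIRSet G ((X \ {x1, x2}) ∪ {x2', x3'})),
      x3 ∈ EPN G x1 ((X \ {x3}) ∪ {x1'}) ∧
      x3' ∈ EPN G x1' ((X \ {x3}) ∪ {x1'}) ∧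
      x2' ∈ EPN G x2 ((X \ {x3}) ∪ {x1'}) ∧
      ({X, X1, X2, X', (X \ {x3}) ∪ {x1'}, (X \ {x1, x2}) ∪ {x2', x3'}} :
          Set (Set V)).ncard = 6 ∧
      (IRGraph G).Adj ⟨X, hX⟩ ⟨X1, hX1⟩ ∧
      (IRGraph G).Adj ⟨(X \ {x3}) ∪ {x1'}, hU⟩ ⟨X1, hX1⟩ ∧
      (IRGraph G).Adj ⟨X1, hX1⟩ ⟨X2, hX2⟩ ∧
      (IRGraph G).Adj ⟨X', hX'⟩ ⟨X2, hX2⟩ ∧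
      (IRGraph G).Adj ⟨(X \ {x1, x2}) ∪ {x2', x3'}, hU'⟩ ⟨X2, hX2⟩ ∧
      ¬ (IRGraph G).Adj ⟨X, hX⟩ ⟨(X \ {x3}) ∪ {x1'}, hU⟩ ∧
      ¬ (IRGraph G).Adj ⟨X, hX⟩ ⟨X2, hX2⟩ ∧
      ¬ (IRGraph G).Adj ⟨X, hX⟩ ⟨X', hX'⟩ ∧
      ¬ (IRGraph G).Adj ⟨X, hX⟩ ⟨(X \ {x1, x2}) ∪ {x2', x3'}, hU'⟩ ∧
      ¬ (IRGraph G).Adj ⟨(X \ {x3}) ∪ {x1'}, hU⟩ ⟨X2, hX2⟩ ∧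
      ¬ (IRGraph G).Adj ⟨(X \ {x3}) ∪ {x1'}, hU⟩ ⟨X', hX'⟩ ∧
      ¬ (IRGraph G).Adj ⟨(X \ {x3}) ∪ {x1'}, hU⟩ ⟨(X \ {x1, x2}) ∪ {x2', x3'}, hU'⟩ ∧
      ¬ (IRGraph G).Adj ⟨X1, hX1⟩ ⟨X', hX'⟩ ∧
      ¬ (IRGraph G).Adj ⟨X1, hX1⟩ ⟨(X \ {x1, x2}) ∪ {x2', x3'}, hU'⟩ ∧
      ¬ (IRGraph G).Adj ⟨X', hX'⟩ ⟨(X \ {x1, x2}) ∪ {x2', x3'}, hU'⟩ := by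
  have hdist : ∀ P Q, (IRGraph G).dist P Q ≤ 3 := fun P Q =>
    hdiam ▸ dist_le_diam (ediam_ne_top_of_diam_ne_zero (by rw [hdiam]; norm_num))
  obtain ⟨R, rfl, hR⟩ : ∃ R, X = R ∪ {x1, x2, x3} ∧ x1 ∉ R ∧ x2 ∉ R ∧ x3 ∉ R :=
    ⟨X \ {x1, x2, x3}, by ext u; simp; grind, by simp, by simp, by simp⟩
  obtain rfl : X1 = R ∪ {x1', x2, x3} := by rw [hX1def]; ext u; simp; grind
  obtain rfl : X2 = R ∪ {x1', x2', x3} := by rw [hX2def]; ext u; simp; grind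
  obtain rfl : X' = R ∪ {x1', x2', x3'} := by rw [hX'def]; ext u; simp; grind
  rw [show (R ∪ {x1, x2, x3}) \ {x3} ∪ {x1'} = R ∪ {x1, x2, x1'} by ext u; simp; grind,
    show (R ∪ {x1, x2, x3}) \ {x1, x2} ∪ {x2', x3'} = R ∪ {x3, x2', x3'} by ext u; simp; grind]
  have h : FlipGeodesic G R x1 x2 x3 x1' x2' x3' :=
    ⟨fun r hr v hv hvr => by grind [(hdeg r (Or.inl hr)).1 ⟨v, hv, hvr.symm⟩], hR,
      ⟨h12, h13, h23⟩, hepn1, hepn2, hepn3, hX, hX1, hX2, hX', htree.isAcyclic,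
      fun D hD => congrArg Subtype.val
        (htree.isAcyclic.eq_of_adj_of_dist_eq_three hdist hadj1 hadj2 hadj3 hgeo hD.symm),
      fun D hD => congrArg Subtype.val
        (htree.isAcyclic.eq_of_adj_of_dist_eq_three hdist hadj3.symm hadj2.symm hadj1.symm
          (by rw [dist_comm, hgeo]) hD.symm)⟩
  exact ⟨⟨fun p hp q hq => h.adj_iff hp hq,
      fun p hp q hq hpq => h.isIndepSet_X₁ hp hq hpq.ne hpq,
      fun p hp q hq hpq => h.isIndepSet_X₂ hp hq hpq.ne hpq⟩,
    h.isIRSet_U, h.isIRSet_U', h.mem_EPN_U.1, h.mem_EPN_U.2.1, h.mem_EPN_U.2.2, h.ncard_eq_six,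
    hadj1, h.adj_U_X₁, hadj2, hadj3.symm, h.adj_U'_X₂, h.not_adj_X_U, h.not_adj_X_X₂,
    h.not_adj_X_X', h.not_adj_X_U', h.not_adj_U_X₂, h.not_adj_U_X', h.not_adj_U_U',
    h.not_adj_X₁_X', h.not_adj_X₁_U', h.not_adj_X'_U'⟩
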